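/- Let K and L be origin-symmetric convex bodies in ℝ² with C² boundaries of positive curvature. Then ∫_{S¹} (κ_K/κ_L)² dV_{L,K} + V(K)·V(L,K)/V(L) ≥ 2·V(L,K), where dV_{L,K} = (1/2)(h_K/κ_L) du is the mixed cone-volume measure. -/

import Mathlib

open Real MeasureTheory intervalIntegral

/-- The radius of curvature `1/κ = h + h''` of the convex body with support
function `h` (as a `2π`-periodic function of the normal angle). -/
noncomputable def bodyRho (h : ℝ → ℝ) (θ : ℝ) : ℝ := h θ + deriv (deriv h) θ

/-- The curvature `κ(u)` of the boundary at the point with outer normal angle `θ`,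
so that `1/κ = h + h''`. -/
noncomputable def bodyCurv (h : ℝ → ℝ) (θ : ℝ) : ℝ := (bodyRho h θ)⁻¹

/-- `h` is the support function of a planar convex body with `C²` boundary of
positive curvature: `h` is `C²`, `2π`-periodic and `h + h'' > 0`. -/
def IsSmoothBody (h : ℝ → ℝ) : Prop :=
  ContDiff ℝ 2 h ∧ Function.Periodic h (2 * π) ∧ ∀ θ : ℝ, 0 < bodyRho h θ

/-- The body is origin-symmetric iff its support function is `π`-antipodally invariant. -/
def OriginSymmetric (h : ℝ → ℝ) : Prop := ∀ θ : ℝ, h (θ + π) = h θ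

/-- The area `V(K) = (1/2)∫_{S¹} h_K (h_K + h_K'') dθ`. -/
noncomputable def bodyArea (h : ℝ → ℝ) : ℝ :=
  (1 / 2) * ∫ θ in (0:ℝ)..(2 * π), h θ * bodyRho h θ

/-- The perimeter `S(K) = ∫_{S¹} h_K dθ`. -/
noncomputable def bodyPerim (h : ℝ → ℝ) : ℝ := ∫ θ in (0:ℝ)..(2 * π), h θ

/-- The mixed volume `V(K, L) = (1/2)∫_{S¹} h_L (h_K + h_K'') dθ`. -/
noncomputable def bodyMixedVol (hK hL : ℝ → ℝ) : ℝ :=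
  (1 / 2) * ∫ θ in (0:ℝ)..(2 * π), hL θ * bodyRho hK θ

/-- The integral `∫_{S¹} f dV_K` of `f` against the cone-volume measure
`dV_K = (1/2) h_K dS_K = (1/2) h_K (h_K + h_K'') dθ`. -/
noncomputable def coneIntegral (h f : ℝ → ℝ) : ℝ :=
  (1 / 2) * ∫ θ in (0:ℝ)..(2 * π), f θ * (h θ * bodyRho h θ)

/-- Two bodies are dilates iff their support functions are positive multiples
of each other. -/
def AreDilates (hK hL : ℝ → ℝ) : Prop := ∃ c : ℝ, 0 < c ∧ ∀ θ : ℝ, hK θ = c * hL θ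

/-- The integral `∫_{S¹} f dV_{L,K}` of `f` against the mixed cone-volume measure
`dV_{L,K} = (1/2) h_K dS_L = (1/2) h_K (h_L + h_L'') dθ`. -/
noncomputable def mixedConeIntegral (hL hK f : ℝ → ℝ) : ℝ :=
  (1 / 2) * ∫ θ in (0:ℝ)..(2 * π), f θ * (hK θ * bodyRho hL θ)


/-!
The left-hand side is bounded below in two steps. Writing `u = h_K/κ_L` and `v = h_K/κ_K`, the
integrand of the first term is `(u/v)² u`, and integrating the tangent-line inequality
`t³ ≥ 3λ²t - 2λ³` at `t = u/v`, `λ = ∫u / ∫v` gives `∫ (κ_K/κ_L)² dV_{L,K} ≥ V(L,K)³ / V(K)²`.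
Minkowski's inequality `V(L,K)² ≥ V(K) V(L)` then reduces the claim to AM-GM.

Minkowski's inequality comes from the quadratic form `∫ (f g - f' g')`, which equals
`∫ f (g + g'')` for periodic functions: by Wirtinger's inequality (Parseval applied to `f` and `f'`)
it is negative semidefinite on mean-zero functions, in particular on `(∫h_L) h_K - (∫h_K) h_L`, and
its discriminant is `V(L,K)² - V(K) V(L)`. The support function of an origin-symmetric body is
positive, since then `2 h(θ) = h(θ) + h(θ + π) = ∫_θ^{θ+π} (h + h'')(s) sin (s - θ) ds`.
-/

open Set

section Calculus

variable {h : ℝ → ℝ}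

theorem ContDiff.contDiff_one_deriv_of_two (hh : ContDiff ℝ 2 h) : ContDiff ℝ 1 (deriv h) :=
  (contDiff_succ_iff_deriv (n := 1)).1 hh |>.2.2

theorem ContDiff.hasDerivAt_deriv_of_two (hh : ContDiff ℝ 2 h) (x : ℝ) :
    HasDerivAt (deriv h) (deriv (deriv h) x) x :=
  (hh.contDiff_one_deriv_of_two.differentiable one_ne_zero x).hasDerivAt

theorem ContDiff.continuous_bodyRho (hh : ContDiff ℝ 2 h) : Continuous (bodyRho h) :=
  hh.continuous.add (hh.contDiff_one_deriv_of_two.continuous_deriv le_rfl)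

theorem Function.Periodic.deriv {c : ℝ} (hh : Function.Periodic h c) :
    Function.Periodic (deriv h) c := fun x => by
  have hshift : (fun y => h (y + c)) = h := funext hh
  rw [← deriv_comp_add_const, hshift]

end Calculus

theorem ContinuousOn.memLp_two_Ioc {E : Type*} [NormedAddCommGroup E] {f : ℝ → E} {a b : ℝ}
    (hf : ContinuousOn f (Icc a b)) : MemLp f 2 (volume.restrict (Ioc a b)) :=
  (memLp_two_iff_integrable_sq_norm
    ((hf.mono Ioc_subset_Icc_self).aestronglyMeasurable measurableSet_Ioc)).2
    ((hf.norm.pow 2).integrableOn_Icc.mono_set Ioc_subset_Icc_self)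

theorem integral_sq_le_of_hasDerivAt_of_integral_eq_zero {a b : ℝ} (hab : a < b) {f f' : ℝ → ℝ}
    (hf : ∀ x ∈ Icc a b, HasDerivAt f (f' x) x) (hf' : ContinuousOn f' (Icc a b))
    (hper : f b = f a) (hmean : ∫ x in a..b, f x = 0) :
    ∫ x in a..b, f x ^ 2 ≤ ((b - a) / (2 * π)) ^ 2 * ∫ x in a..b, f' x ^ 2 := by
  set F : ℝ → ℂ := fun x => f x
  set F' : ℝ → ℂ := fun x => f' x
  have hF : ∀ x ∈ uIcc a b, HasDerivAt F (F' x) x := fun x hx =>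
    (hf x (uIcc_of_le hab.le ▸ hx)).ofReal_comp
  have hFc : ContinuousOn F (Icc a b) := fun x hx =>
    (hf x hx).continuousAt.continuousWithinAt.ofReal
  have hF'c : ContinuousOn F' (Icc a b) := Complex.continuous_ofReal.comp_continuousOn hf'
  have hcoeff : ∀ n : ℤ, ‖fourierCoeffOn hab F n‖ ^ 2
      ≤ ((b - a) / (2 * π)) ^ 2 * ‖fourierCoeffOn hab F' n‖ ^ 2 := by
    intro n
    rcases eq_or_ne n 0 with rfl | hn
    · have hzero : fourierCoeffOn hab F 0 = 0 := by
        simp [fourierCoeffOn_eq_integral, F, intervalIntegral.integral_ofReal, hmean]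
      rw [hzero, norm_zero, sq, zero_mul]
      positivity
    · rw [fourierCoeffOn_of_hasDerivAt hab hn hF (hF'c.intervalIntegrable_of_Icc hab.le),
        show F b - F a = 0 by simp [F, hper]]
      have hn1 : (1 : ℝ) ≤ |(n : ℝ)| := by exact_mod_cast Int.one_le_abs hn
      simp only [mul_zero, zero_sub, mul_neg, norm_neg, norm_mul, norm_div, norm_one,
        Complex.norm_real, Complex.norm_I, Complex.norm_intCast, Complex.norm_ofNat,
        ← Complex.ofReal_sub, norm_eq_abs, abs_of_pos (sub_pos.2 hab), abs_of_pos pi_pos]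
      calc _ = ((b - a) / (2 * π)) ^ 2 * ‖fourierCoeffOn hab F' n‖ ^ 2 / |(n : ℝ)| ^ 2 := by
            field_simp
        _ ≤ _ := div_le_self (by positivity) (one_le_pow₀ hn1)
  have hparseval := hasSum_le hcoeff (hasSum_sq_fourierCoeffOn hab hFc.memLp_two_Ioc)
    ((hasSum_sq_fourierCoeffOn hab hF'c.memLp_two_Ioc).mul_left _)
  simp only [F, F', Complex.norm_real, norm_eq_abs, sq_abs, smul_eq_mul] at hparseval
  rw [mul_left_comm] at hparseval
  exact le_of_mul_le_mul_left hparseval (inv_pos.2 (sub_pos.2 hab))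

theorem integral_sq_sub_deriv_sq_nonpos {w : ℝ → ℝ} (hw : ContDiff ℝ 1 w)
    (hper : Function.Periodic w (2 * π)) (hmean : ∫ θ in (0:ℝ)..(2 * π), w θ = 0) :
    ∫ θ in (0:ℝ)..(2 * π), (w θ ^ 2 - deriv w θ ^ 2) ≤ 0 := by
  have hw' := hw.continuous_deriv le_rfl
  have hwirt := integral_sq_le_of_hasDerivAt_of_integral_eq_zero two_pi_pos
    (fun x _ => (hw.differentiable one_ne_zero x).hasDerivAt) hw'.continuousOn
    (by simpa using hper 0) hmean
  rw [sub_zero, div_self two_pi_pos.ne', one_pow, one_mul] at hwirt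
  rw [intervalIntegral.integral_sub (f := fun θ => w θ ^ 2) (g := fun θ => deriv w θ ^ 2)
    ((hw.continuous.pow 2).intervalIntegrable _ _) ((hw'.pow 2).intervalIntegrable _ _)]
  linarith

theorem integral_bodyRho_mul_sin {h : ℝ → ℝ} (hh : ContDiff ℝ 2 h) (θ : ℝ) :
    ∫ s in θ..θ + π, bodyRho h s * sin (s - θ) = h θ + h (θ + π) := by
  have hderiv : ∀ s, HasDerivAt (fun s => deriv h s * sin (s - θ) - h s * cos (s - θ))
      (bodyRho h s * sin (s - θ)) s := fun s => by
    have hs : HasDerivAt (fun s => s - θ) 1 s := (hasDerivAt_id' s).sub_const θ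
    refine (((hh.hasDerivAt_deriv_of_two s).mul hs.sin).sub
      ((hh.differentiable two_ne_zero s).hasDerivAt.mul hs.cos)).congr_deriv ?_
    simp only [bodyRho]
    ring
  rw [integral_eq_sub_of_hasDerivAt (fun s _ => hderiv s) ((hh.continuous_bodyRho.mul
    (continuous_sin.comp (continuous_sub_right θ))).intervalIntegrable _ _)]
  simp [add_comm]

theorem IsSmoothBody.pos_of_originSymmetric {h : ℝ → ℝ} (hb : IsSmoothBody h)
    (hs : OriginSymmetric h) (θ : ℝ) : 0 < h θ := by
  have hint := integral_bodyRho_mul_sin hb.1 θ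
  rw [hs θ] at hint
  have hpos : 0 < ∫ s in θ..θ + π, bodyRho h s * sin (s - θ) :=
    intervalIntegral_pos_of_pos_on ((hb.1.continuous_bodyRho.mul
      (continuous_sin.comp (continuous_sub_right θ))).intervalIntegrable _ _)
      (fun s hs => mul_pos (hb.2.2 s)
        (sin_pos_of_pos_of_lt_pi (by linarith [hs.1]) (by linarith [hs.2])))
      (by linarith [pi_pos])
  linarith

theorem integral_mul_bodyRho {h₁ h₂ : ℝ → ℝ} (c₁ : ContDiff ℝ 1 h₁) (c₂ : ContDiff ℝ 2 h₂)
    (p₁ : Function.Periodic h₁ (2 * π)) (p₂ : Function.Periodic h₂ (2 * π)) :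
    ∫ θ in (0:ℝ)..(2 * π), h₁ θ * bodyRho h₂ θ
      = ∫ θ in (0:ℝ)..(2 * π), (h₁ θ * h₂ θ - deriv h₁ θ * deriv h₂ θ) := by
  have hd₂ := c₂.contDiff_one_deriv_of_two
  have hparts := intervalIntegral.integral_mul_deriv_eq_deriv_mul (a := 0) (b := 2 * π)
    (fun x _ => (c₁.differentiable one_ne_zero x).hasDerivAt)
    (fun x _ => c₂.hasDerivAt_deriv_of_two x)
    ((c₁.continuous_deriv le_rfl).intervalIntegrable _ _)
    ((hd₂.continuous_deriv le_rfl).intervalIntegrable _ _)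
  have hboundary : h₁ (2 * π) * deriv h₂ (2 * π) = h₁ 0 * deriv h₂ 0 := by
    simpa using congrArg₂ (· * ·) (p₁ 0) (p₂.deriv 0)
  have := c₁.continuous; have := c₂.continuous; have := c₁.continuous_deriv le_rfl
  have := hd₂.continuous; have := hd₂.continuous_deriv le_rfl
  simp only [bodyRho, mul_add]
  rw [intervalIntegral.integral_add, intervalIntegral.integral_sub, hparts, hboundary, sub_self,
    zero_sub, sub_eq_add_neg]
  all_goals apply Continuous.intervalIntegrable; fun_prop

theorem integral_sq_sub_deriv_sq_combination_nonpos {f g : ℝ → ℝ} (cf : ContDiff ℝ 1 f)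
    (cg : ContDiff ℝ 1 g) (pf : Function.Periodic f (2 * π)) (pg : Function.Periodic g (2 * π)) :
    (∫ θ in (0:ℝ)..(2 * π), g θ) ^ 2
        * (∫ θ in (0:ℝ)..(2 * π), (f θ * f θ - deriv f θ * deriv f θ))
      - 2 * (∫ θ in (0:ℝ)..(2 * π), f θ) * (∫ θ in (0:ℝ)..(2 * π), g θ)
        * (∫ θ in (0:ℝ)..(2 * π), (f θ * g θ - deriv f θ * deriv g θ))
      + (∫ θ in (0:ℝ)..(2 * π), f θ) ^ 2
        * (∫ θ in (0:ℝ)..(2 * π), (g θ * g θ - deriv g θ * deriv g θ)) ≤ 0 := by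
  have := cf.continuous; have := cg.continuous
  have := cf.continuous_deriv le_rfl; have := cg.continuous_deriv le_rfl
  generalize ha : ∫ θ in (0:ℝ)..(2 * π), f θ = a
  generalize hb : ∫ θ in (0:ℝ)..(2 * π), g θ = b
  set w := fun θ => b * f θ - a * g θ
  have hw : ContDiff ℝ 1 w := (contDiff_const.mul cf).sub (contDiff_const.mul cg)
  have hw' : deriv w = fun θ => b * deriv f θ - a * deriv g θ := funext fun θ =>
    (((cf.differentiable one_ne_zero θ).hasDerivAt.const_mul b).sub
      ((cg.differentiable one_ne_zero θ).hasDerivAt.const_mul a)).deriv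
  have hmean : ∫ θ in (0:ℝ)..(2 * π), w θ = 0 := by
    rw [intervalIntegral.integral_sub, intervalIntegral.integral_const_mul,
      intervalIntegral.integral_const_mul, ha, hb, mul_comm, sub_self]
    all_goals apply Continuous.intervalIntegrable; fun_prop
  have hneg := integral_sq_sub_deriv_sq_nonpos hw (fun θ => by simp [w, pf θ, pg θ]) hmean
  convert hneg using 1
  rw [← intervalIntegral.integral_const_mul, ← intervalIntegral.integral_const_mul,
    ← intervalIntegral.integral_const_mul, ← intervalIntegral.integral_sub,
    ← intervalIntegral.integral_add]
  · refine intervalIntegral.integral_congr fun θ _ => ?_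
    simp only [w, hw']
    ring
  all_goals apply Continuous.intervalIntegrable; fun_prop

theorem mul_le_sq_of_quadratic_nonpos {a b I J X : ℝ} (ha : a ≠ 0) (hI : 0 ≤ I)
    (hq : b ^ 2 * I - 2 * a * b * X + a ^ 2 * J ≤ 0) : I * J ≤ X ^ 2 := by
  -- `I * (b²I - 2abX + a²J) = (bI - aX)² + a²(IJ - X²)`
  have hdisc : a ^ 2 * (I * J - X ^ 2) ≤ 0 := by
    nlinarith [mul_nonpos_of_nonneg_of_nonpos hI hq, sq_nonneg (b * I - a * X)]
  nlinarith [sq_pos_of_ne_zero ha]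

theorem bodyArea_mul_bodyArea_le_bodyMixedVol_sq {hK hL : ℝ → ℝ} (bK : IsSmoothBody hK)
    (cL : ContDiff ℝ 2 hL) (pL : Function.Periodic hL (2 * π)) (posK : ∀ θ, 0 < hK θ) :
    bodyArea hK * bodyArea hL ≤ bodyMixedVol hL hK ^ 2 := by
  obtain ⟨cK, pK, ρK⟩ := bK
  have cK1 := cK.of_le one_le_two
  have cL1 := cL.of_le one_le_two
  have hquad := integral_sq_sub_deriv_sq_combination_nonpos cK1 cL1 pK pL
  rw [← integral_mul_bodyRho cK1 cK pK pK, ← integral_mul_bodyRho cK1 cL pK pL,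
    ← integral_mul_bodyRho cL1 cL pL pL] at hquad
  have hI : 0 ≤ ∫ θ in (0:ℝ)..(2 * π), hK θ * bodyRho hK θ :=
    intervalIntegral.integral_nonneg two_pi_pos.le fun θ _ => (mul_pos (posK θ) (ρK θ)).le
  have ha : 0 < ∫ θ in (0:ℝ)..(2 * π), hK θ :=
    intervalIntegral_pos_of_pos_on (cK.continuous.intervalIntegrable _ _)
      (fun θ _ => posK θ) two_pi_pos
  have hmink := mul_le_sq_of_quadratic_nonpos ha.ne' hI hquad
  simp only [bodyArea, bodyMixedVol]
  linarith

theorem cube_integral_le_mul_sq_integral {a b : ℝ} (hab : a < b) {u v : ℝ → ℝ}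
    (hu : ContinuousOn u (Icc a b)) (hv : ContinuousOn v (Icc a b))
    (hu0 : ∀ x ∈ Icc a b, 0 ≤ u x) (hv0 : ∀ x ∈ Icc a b, 0 < v x) :
    (∫ x in a..b, u x) ^ 3 ≤ (∫ x in a..b, (u x / v x) ^ 2 * u x) * (∫ x in a..b, v x) ^ 2 := by
  set U := ∫ x in a..b, u x
  set V := ∫ x in a..b, v x
  have hV : 0 < V := intervalIntegral_pos_of_pos_on (hv.intervalIntegrable_of_Icc hab.le)
    (fun x hx => hv0 x (Ioo_subset_Icc_self hx)) hab
  have hU : 0 ≤ U := intervalIntegral.integral_nonneg hab.le hu0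
  set l := U / V
  have hl : 0 ≤ l := div_nonneg hU hV.le
  -- the tangent line of `t ↦ t³` at `l`, evaluated at `t = u x / v x` and multiplied by `v x`
  have htangent : ∀ x ∈ Icc a b,
      3 * l ^ 2 * u x - 2 * l ^ 3 * v x ≤ (u x / v x) ^ 2 * u x := fun x hx => by
    have hvx := hv0 x hx
    have hfactor : (u x / v x) ^ 2 * u x - (3 * l ^ 2 * u x - 2 * l ^ 3 * v x)
        = v x * ((u x / v x - l) ^ 2 * (u x / v x + 2 * l)) := by
      field_simp
      ring
    have : 0 ≤ u x / v x + 2 * l := by have := div_nonneg (hu0 x hx) hvx.le; linarith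
    nlinarith [mul_nonneg hvx.le (mul_nonneg (sq_nonneg (u x / v x - l)) this)]
  have hint := intervalIntegral.integral_mono_on (μ := volume)
    (f := fun x => 3 * l ^ 2 * u x - 2 * l ^ 3 * v x) (g := fun x => (u x / v x) ^ 2 * u x)
    hab.le (((hu.const_mul _).sub (hv.const_mul _)).intervalIntegrable_of_Icc hab.le)
    ((((hu.div hv fun x hx => (hv0 x hx).ne').pow 2).mul hu).intervalIntegrable_of_Icc hab.le)
    htangent
  rw [intervalIntegral.integral_sub (f := fun x => 3 * l ^ 2 * u x)
    ((hu.const_mul _).intervalIntegrable_of_Icc hab.le)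
    ((hv.const_mul _).intervalIntegrable_of_Icc hab.le), intervalIntegral.integral_const_mul,
    intervalIntegral.integral_const_mul] at hint
  have hvalue : 3 * l ^ 2 * U - 2 * l ^ 3 * V = U ^ 3 / V ^ 2 := by
    simp only [l]
    field_simp
    ring
  rwa [hvalue, div_le_iff₀ (by positivity)] at hint

theorem bodyMixedVol_pos {hK hL : ℝ → ℝ} (bL : IsSmoothBody hL) (cK : Continuous hK)
    (posK : ∀ θ, 0 < hK θ) : 0 < bodyMixedVol hL hK :=
  mul_pos one_half_pos <| intervalIntegral_pos_of_pos_on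
    ((cK.mul bL.1.continuous_bodyRho).intervalIntegrable _ _)
    (fun θ _ => mul_pos (posK θ) (bL.2.2 θ)) two_pi_pos

theorem bodyArea_pos {h : ℝ → ℝ} (hb : IsSmoothBody h) (pos : ∀ θ, 0 < h θ) : 0 < bodyArea h :=
  bodyMixedVol_pos hb hb.1.continuous pos

theorem bodyMixedVol_cube_le {hK hL : ℝ → ℝ} (bK : IsSmoothBody hK) (bL : IsSmoothBody hL)
    (posK : ∀ θ, 0 < hK θ) :
    bodyMixedVol hL hK ^ 3 ≤
      mixedConeIntegral hL hK (fun θ => (bodyCurv hK θ / bodyCurv hL θ) ^ 2) * bodyArea hK ^ 2 := by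
  have hcurv : ∀ θ, bodyCurv hK θ / bodyCurv hL θ
      = hK θ * bodyRho hL θ / (hK θ * bodyRho hK θ) := fun θ => by
    rw [bodyCurv, bodyCurv, inv_div_inv, mul_div_mul_left _ _ (posK θ).ne']
  have cK := bK.1.continuous
  have hcube := cube_integral_le_mul_sq_integral two_pi_pos
    (u := fun θ => hK θ * bodyRho hL θ) (v := fun θ => hK θ * bodyRho hK θ)
    (cK.mul bL.1.continuous_bodyRho).continuousOn (cK.mul bK.1.continuous_bodyRho).continuousOn
    (fun θ _ => (mul_pos (posK θ) (bL.2.2 θ)).le) (fun θ _ => mul_pos (posK θ) (bK.2.2 θ))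
  simp only [mixedConeIntegral, bodyMixedVol, bodyArea, hcurv]
  linarith

theorem two_mul_le_add_mul_div_of_mul_le_sq {A B X M : ℝ} (hA : 0 < A) (hB : 0 < B) (hX : 0 ≤ X)
    (hAB : A * B ≤ X ^ 2) (hM : X ^ 3 ≤ M * A ^ 2) : 2 * X ≤ M + A * X / B := by
  have hM' : X ^ 3 / A ^ 2 ≤ M := (div_le_iff₀ (by positivity)).2 hM
  have hamgm : 2 * X ≤ X ^ 3 / A ^ 2 + A * X / B := by
    rw [div_add_div _ _ (by positivity) hB.ne', le_div_iff₀ (by positivity)]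
    nlinarith [mul_nonneg hX (mul_nonneg hA.le (sq_nonneg (A - B))),
      mul_le_mul_of_nonneg_left hAB (mul_nonneg hX hB.le)]
  linarith

/-- For origin-symmetric planar convex bodies `K, L` with `C²`
boundaries of positive curvature,
`∫_{S¹} (κ_K/κ_L)² dV_{L,K} + V(K)V(L,K)/V(L) ≥ 2 V(L,K)`. -/
theorem stmt10 (hK hL : ℝ → ℝ) (bK : IsSmoothBody hK) (bL : IsSmoothBody hL)
    (sK : OriginSymmetric hK) (sL : OriginSymmetric hL) :
    mixedConeIntegral hL hK (fun θ => (bodyCurv hK θ / bodyCurv hL θ) ^ 2) +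
      bodyArea hK * bodyMixedVol hL hK / bodyArea hL ≥ 2 * bodyMixedVol hL hK := by
  have posK := bK.pos_of_originSymmetric sK
  have posL := bL.pos_of_originSymmetric sL
  exact two_mul_le_add_mul_div_of_mul_le_sq (bodyArea_pos bK posK) (bodyArea_pos bL posL)
    (bodyMixedVol_pos bL bK.1.continuous posK).le
    (bodyArea_mul_bodyArea_le_bodyMixedVol_sq bK bL.1 bL.2.1 posK)
    (bodyMixedVol_cube_le bK bL posK)
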